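/- arXiv:1008.2009 — 9 statements merged into one kernel-verified Lean document; each statement's English description precedes it below -/
import Mathlib

section
/- In any associative dialgebra D, the quasi-Jordan product a·b := a ⊣ b + b ⊢ a satisfies the right quasi-Jordan identity: (b·(a·a))·a = (b·a)·(a·a) for all a, b ∈ D. -/
/-- The quasi-Jordan product `a ⊣ b + b ⊢ a` in a dialgebra with left product `l`
and right product `r`. -/
def q {R : Type*} [CommRing R] {D : Type*} [AddCommGroup D] [Module R D]
    (l r : D →ₗ[R] D →ₗ[R] D) (a b : D) : D := l a b + r b a

theorem quasiJordan_right_quasi_jordan {R : Type*} [CommRing R] {D : Type*} [AddCommGroup D] [Module R D]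
    (l r : D →ₗ[R] D →ₗ[R] D)
    (h1 : ∀ a b c : D, l (l a b) c = l a (l b c))
    (h2 : ∀ a b c : D, r (r a b) c = r a (r b c))
    (h3 : ∀ a b c : D, l (r a b) c = r a (l b c))
    (h4 : ∀ a b c : D, r (r a b) c = r (l a b) c)
    (h5 : ∀ a b c : D, l a (l b c) = l a (r b c)) :
    ∀ a b : D, q l r (q l r b (q l r a a)) a = q l r (q l r b a) (q l r a a) := by
  intro a b
  simp only [q, map_add, LinearMap.add_apply, h1, h3, ← h4, h2]
  simp only [← h5, h1, h3]
  abel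
end

section
/- In any associative dialgebra D, the quasi-Jordan product a·b := a ⊣ b + b ⊢ a satisfies the associator-derivation identity: (b·(a·a))·c − b·((a·a)·c) = 2·(((b·a)·c)·a − (b·(a·c))·a), i.e. (b, a², c) = 2(b, a, c)·a where (x,y,z) := (x·y)·z − x·(y·z). -/
theorem quasiJordan_associator_derivation {R : Type*} [CommRing R] {D : Type*} [AddCommGroup D] [Module R D]
    (l r : D →ₗ[R] D →ₗ[R] D)
    (h1 : ∀ a b c : D, l (l a b) c = l a (l b c))
    (h2 : ∀ a b c : D, r (r a b) c = r a (r b c))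
    (h3 : ∀ a b c : D, l (r a b) c = r a (l b c))
    (h4 : ∀ a b c : D, r (r a b) c = r (l a b) c)
    (h5 : ∀ a b c : D, l a (l b c) = l a (r b c)) :
    ∀ a b c : D,
      q l r (q l r b (q l r a a)) c - q l r b (q l r (q l r a a) c) =
        2 • (q l r (q l r (q l r b a) c) a - q l r (q l r b (q l r a c)) a) := by
  intro a b c
  simp only [q, map_add, LinearMap.add_apply, two_smul]
  simp only [h1, h3, ← h5, ← h2, h4]
  abel
end

section
/- In any associative dialgebra D, the quasi-Jordan product a·b := a ⊣ b + b ⊢ a satisfies the multilinear identity J: (a·(b·c))·d + (a·(b·d))·c + (a·(c·d))·b = (a·b)·(c·d) + (a·c)·(b·d) + (a·d)·(b·c) for all a, b, c, d ∈ D. -/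
theorem quasiJordan_identity_J {R : Type*} [CommRing R] {D : Type*} [AddCommGroup D] [Module R D]
    (l r : D →ₗ[R] D →ₗ[R] D)
    (h1 : ∀ a b c : D, l (l a b) c = l a (l b c))
    (h2 : ∀ a b c : D, r (r a b) c = r a (r b c))
    (h3 : ∀ a b c : D, l (r a b) c = r a (l b c))
    (h4 : ∀ a b c : D, r (r a b) c = r (l a b) c)
    (h5 : ∀ a b c : D, l a (l b c) = l a (r b c)) :
    ∀ a b c d : D,
      q l r (q l r a (q l r b c)) d + q l r (q l r a (q l r b d)) c +
        q l r (q l r a (q l r c d)) b =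
      q l r (q l r a b) (q l r c d) + q l r (q l r a c) (q l r b d) +
        q l r (q l r a d) (q l r b c) := by
  intro a b c d
  have h4' : ∀ a b c : D, r (l a b) c = r a (r b c) := fun a b c => (h4 a b c).symm.trans (h2 a b c)
  have h5' : ∀ a b c : D, l a (r b c) = l a (l b c) := fun a b c => (h5 a b c).symm
  simp only [q, map_add, LinearMap.add_apply, h1, h2, h3, h4', h5']
  abel
end

section
/- In any associative dialgebra D, the quasi-Jordan product a·b := a ⊣ b + b ⊢ a satisfies the multilinear identity K: ((a·b)·d)·c + ((a·c)·d)·b + a·((b·c)·d) = (a·(b·c))·d + (a·(b·d))·c + (a·(c·d))·b for all a, b, c, d ∈ D. -/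
theorem quasiJordan_identity_K {R : Type*} [CommRing R] {D : Type*} [AddCommGroup D] [Module R D]
    (l r : D →ₗ[R] D →ₗ[R] D)
    (h1 : ∀ a b c : D, l (l a b) c = l a (l b c))
    (h2 : ∀ a b c : D, r (r a b) c = r a (r b c))
    (h3 : ∀ a b c : D, l (r a b) c = r a (l b c))
    (h4 : ∀ a b c : D, r (r a b) c = r (l a b) c)
    (h5 : ∀ a b c : D, l a (l b c) = l a (r b c)) :
    ∀ a b c d : D,
      q l r (q l r (q l r a b) d) c + q l r (q l r (q l r a c) d) b +
        q l r a (q l r (q l r b c) d) =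
      q l r (q l r a (q l r b c)) d + q l r (q l r a (q l r b d)) c +
        q l r (q l r a (q l r c d)) b := by
  intro a b c d
  have h4' : ∀ a b c : D, r (l a b) c = r a (r b c) := fun a b c => (h4 a b c).symm.trans (h2 a b c)
  have h5' : ∀ a b c : D, l a (r b c) = l a (l b c) := fun a b c => (h5 a b c).symm
  simp only [q, map_add, LinearMap.add_apply, h1, h2, h3, h4', h5']
  abel
end

section
/- There exists an associative dialgebra D and elements a, b ∈ D such that the quasi-Jordan product a·b := a ⊣ b + b ⊢ a does NOT satisfy the left quasi-Jordan identity, i.e. (a·a)·(a·b) ≠ a·((a·a)·b). -/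
/-!
An idempotent ring endomorphism `π` of an associative ring turns it into a dialgebra with
`a ⊣ b = a π(b)` and `a ⊢ b = π(a) b`, whose quasi-Jordan product is `a · b = a π(b) + π(b) a`.
On upper triangular `2 × 2` integer matrices with `π` the diagonal part, `a = E₁₁ + E₁₂` and
`b = E₁₁` give `(a·a)·(a·b) = 8E₁₁ + 2E₁₂` but `a·((a·a)·b) = 8E₁₁ + 4E₁₂`.
-/

/-- A bundled associative dialgebra over ℤ: an additive abelian group with two
biadditive operations `l` (⊣) and `r` (⊢) satisfying the five dialgebra axioms. -/
structure Dialgebra where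
  carrier : Type
  [grp : AddCommGroup carrier]
  l : carrier → carrier → carrier
  r : carrier → carrier → carrier
  l_add_left : ∀ a b c, l (a + b) c = l a c + l b c
  l_add_right : ∀ a b c, l a (b + c) = l a b + l a c
  r_add_left : ∀ a b c, r (a + b) c = r a c + r b c
  r_add_right : ∀ a b c, r a (b + c) = r a b + r a c
  ax1 : ∀ a b c, l (l a b) c = l a (l b c)
  ax2 : ∀ a b c, r (r a b) c = r a (r b c)
  ax3 : ∀ a b c, l (r a b) c = r a (l b c)
  ax4 : ∀ a b c, r (r a b) c = r (l a b) c
  ax5 : ∀ a b c, l a (l b c) = l a (r b c)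

attribute [instance] Dialgebra.grp

/-- The quasi-Jordan product in a bundled dialgebra. -/
def Dialgebra.q (D : Dialgebra) (a b : D.carrier) : D.carrier := D.l a b + D.r b a

namespace Dialgebra

abbrev ofIdempotentHom (R : Type) [NonUnitalRing R] (π : R →ₙ+* R) (hπ : ∀ x, π (π x) = π x) :
    Dialgebra where
  carrier := R
  l a b := a * π b
  r a b := π a * b
  l_add_left a b c := add_mul a b (π c)
  l_add_right a b c := by rw [map_add, mul_add]
  r_add_left a b c := by rw [map_add, add_mul]
  r_add_right a b c := mul_add (π a) b c
  ax1 a b c := by simp only [map_mul, hπ, mul_assoc]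
  ax2 a b c := by simp only [map_mul, hπ, mul_assoc]
  ax3 a b c := mul_assoc (π a) b (π c)
  ax4 a b c := by simp only [map_mul, hπ]
  ax5 a b c := by simp only [map_mul, hπ]

theorem ofIdempotentHom_q (R : Type) [NonUnitalRing R] (π : R →ₙ+* R)
    (hπ : ∀ x, π (π x) = π x) (a b : R) :
    (ofIdempotentHom R π hπ).q a b = a * π b + π b * a :=
  rfl

end Dialgebra

namespace Matrix

theorem IsUpperTriangular.diag_mul {n R : Type*} [Fintype n] [LinearOrder n]
    [NonUnitalNonAssocSemiring R] {M N : Matrix n n R} (hM : M.IsUpperTriangular)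
    (hN : N.IsUpperTriangular) : (M * N).diag = M.diag * N.diag := by
  ext i
  refine Finset.sum_eq_single i (fun k _ hki => ?_) (by simp)
  rcases hki.lt_or_gt with hlt | hgt
  · simp only [hM hlt, zero_mul]
  · simp only [hN hgt, mul_zero]

variable {n R : Type} [Fintype n] [DecidableEq n] [LinearOrder n] [Ring R]

variable (n R) in
abbrev upperTriangular : Subalgebra ℤ (Matrix n n R) :=
  blockTriangularSubalgebra ℤ R id

def upperTriangularDiagHom : upperTriangular n R →ₙ+* upperTriangular n R where
  toFun M := ⟨diagonal M.1.diag, blockTriangular_diagonal _⟩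
  map_zero' := by ext1; simp
  map_add' M N := by ext1; simp
  map_mul' M N := by
    ext1
    simp [IsUpperTriangular.diag_mul M.2 N.2]

theorem upperTriangularDiagHom_apply_val (M : upperTriangular n R) :
    (upperTriangularDiagHom M).1 = diagonal M.1.diag :=
  rfl

theorem upperTriangularDiagHom_idem (M : upperTriangular n R) :
    upperTriangularDiagHom (upperTriangularDiagHom M) = upperTriangularDiagHom M :=
  Subtype.ext <| congrArg diagonal (diag_diagonal _)

variable (n R) in
abbrev upperTriangularDialgebra : Dialgebra :=
  Dialgebra.ofIdempotentHom (upperTriangular n R) upperTriangularDiagHom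
    upperTriangularDiagHom_idem

end Matrix

theorem quasiJordan_not_left_quasi_jordan :
    ∃ (D : Dialgebra) (a b : D.carrier),
      D.q (D.q a a) (D.q a b) ≠ D.q a (D.q (D.q a a) b) := by
  refine ⟨Matrix.upperTriangularDialgebra (Fin 2) ℤ,
    ⟨!![1, 1; 0, 0], by rw [Matrix.mem_blockTriangularSubalgebra]; decide⟩,
    ⟨!![1, 0; 0, 0], by rw [Matrix.mem_blockTriangularSubalgebra]; decide⟩, fun h => ?_⟩
  have := congrArg (fun x : Matrix.upperTriangular (Fin 2) ℤ => x.1 0 1) h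
  simp only [Dialgebra.ofIdempotentHom_q, Matrix.upperTriangularDiagHom_apply_val,
    Subalgebra.coe_add, Subalgebra.coe_mul, Matrix.add_apply, Matrix.mul_apply, Fin.sum_univ_two,
    Matrix.diagonal_apply, Matrix.diag_apply] at this
  norm_num at this
end

section
/- In a right-commutative nonassociative algebra over a field of characteristic ≠ 2, the right quasi-Jordan identity (ba²)a = (ba)a² (for all a, b) implies the multilinear identity J: (a(bc))d + (a(bd))c + (a(cd))b = (ab)(cd) + (ac)(bd) + (ad)(bc) (for all a, b, c, d). -/
theorem right_quasi_jordan_implies_J {F : Type*} [Field F] {A : Type*} [AddCommGroup A] [Module F A]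
    (m : A →ₗ[F] A →ₗ[F] A)
    (hchar : (2 : F) ≠ 0)
    (hrc : ∀ x y z : A, m x (m y z) = m x (m z y))
    (hqj : ∀ a b : A, m (m b (m a a)) a = m (m b a) (m a a)) :
    ∀ a b c d : A,
      m (m a (m b c)) d + m (m a (m b d)) c + m (m a (m c d)) b =
        m (m a b) (m c d) + m (m a c) (m b d) + m (m a d) (m b c) := by
  intro a b c d
  have e1 := hqj (b + c + d) a
  have e2 := hqj (b + c) a
  have e3 := hqj (b + d) a
  have e4 := hqj (c + d) a
  have e5 := hqj b a
  have e6 := hqj c a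
  have e7 := hqj d a
  simp only [map_add, LinearMap.add_apply,
    hrc a c b, hrc a d b, hrc a d c,
    hrc (m a b) c b, hrc (m a b) d b, hrc (m a b) d c,
    hrc (m a c) c b, hrc (m a c) d b, hrc (m a c) d c,
    hrc (m a d) c b, hrc (m a d) d b, hrc (m a d) d c] at e1 e2 e3 e4
  have key : (m (m a (m b c)) d + m (m a (m b d)) c + m (m a (m c d)) b) +
      (m (m a (m b c)) d + m (m a (m b d)) c + m (m a (m c d)) b) =
      (m (m a b) (m c d) + m (m a c) (m b d) + m (m a d) (m b c)) +
      (m (m a b) (m c d) + m (m a c) (m b d) + m (m a d) (m b c)) := by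
    linear_combination (norm := abel1) e1 - e2 - e3 - e4 + e5 + e6 + e7
  have h2 : (2 : F) • (m (m a (m b c)) d + m (m a (m b d)) c + m (m a (m c d)) b) =
      (2 : F) • (m (m a b) (m c d) + m (m a c) (m b d) + m (m a d) (m b c)) := by
    rw [two_smul, two_smul]; exact key
  exact smul_right_injective A hchar h2
end

section
/- In any associative dialgebra, for all a, b: (b·(a·a))·c − b·((a·a)·c) = −2(b⊣c)⊣(a⊣a) + 2(c⊢b)⊣(a⊣a) + 2(a⊣a)⊢(b⊣c) − 2(a⊣a)⊢(c⊢b), where a·b := a ⊣ b + b ⊢ a. In particular the associator (b, a², c) of the quasi-Jordan product equals a sum of four dialgebra monomials each with coefficient ±2. -/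
theorem quasiJordan_associator_expansion {R : Type*} [CommRing R] {D : Type*} [AddCommGroup D] [Module R D]
    (l r : D →ₗ[R] D →ₗ[R] D)
    (h1 : ∀ a b c : D, l (l a b) c = l a (l b c))
    (h2 : ∀ a b c : D, r (r a b) c = r a (r b c))
    (h3 : ∀ a b c : D, l (r a b) c = r a (l b c))
    (h4 : ∀ a b c : D, r (r a b) c = r (l a b) c)
    (h5 : ∀ a b c : D, l a (l b c) = l a (r b c)) :
    ∀ a b c : D,
      q l r (q l r b (q l r a a)) c - q l r b (q l r (q l r a a) c) =
        -(2 • l (l b c) (l a a)) + 2 • l (r c b) (l a a) +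
          2 • r (l a a) (l b c) - 2 • r (l a a) (r c b) := by
  intro a b c
  have h4' : ∀ a b c : D, r (l a b) c = r a (r b c) := fun a b c => by rw [← h4, h2]
  simp only [q, map_add, LinearMap.add_apply, ← h5, ← h1, h2, h3, h4']
  abel
end

section
/- In any associative dialgebra, every parenthesized product of elements a₁, …, aₙ (n ≥ 1) using the operations ⊣ and ⊢ equals its normal form (a₁ ⊢ ⋯ ⊢ a_{k−1}) ⊢ a_k ⊣ (a_{k+1} ⊣ ⋯ ⊣ aₙ), where a_k is the center of the monomial, defined recursively by c(w) = w for a single element, c(w₁ ⊣ w₂) = c(w₁), and c(w₁ ⊢ w₂) = c(w₂). -/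
/-- A dialgebra monomial: a parenthesized product of elements using ⊣ and ⊢. -/
inductive DiaWord (D : Type*) : Type _
  | leaf : D → DiaWord D
  | dashv : DiaWord D → DiaWord D → DiaWord D  -- w₁ ⊣ w₂
  | vdash : DiaWord D → DiaWord D → DiaWord D  -- w₁ ⊢ w₂

variable {D : Type*}

/-- Evaluate a dialgebra monomial using the operations `l` (⊣) and `r` (⊢). -/
def DiaWord.eval (l r : D → D → D) : DiaWord D → D
  | .leaf a => a
  | .dashv w₁ w₂ => l (w₁.eval l r) (w₂.eval l r)
  | .vdash w₁ w₂ => r (w₁.eval l r) (w₂.eval l r)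

/-- The center of a dialgebra monomial: follow the left factor through ⊣ and the
right factor through ⊢. -/
def DiaWord.center : DiaWord D → D
  | .leaf a => a
  | .dashv w₁ _ => w₁.center
  | .vdash _ w₂ => w₂.center

/-- The list of leaves of a monomial, in order. -/
def DiaWord.leaves : DiaWord D → List D
  | .leaf a => [a]
  | .dashv w₁ w₂ => w₁.leaves ++ w₂.leaves
  | .vdash w₁ w₂ => w₁.leaves ++ w₂.leaves

/-- The arguments to the left of the center. -/
def DiaWord.leftArgs : DiaWord D → List D
  | .leaf _ => []
  | .dashv w₁ _ => w₁.leftArgs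
  | .vdash w₁ w₂ => w₁.leaves ++ w₂.leftArgs

/-- The arguments to the right of the center. -/
def DiaWord.rightArgs : DiaWord D → List D
  | .leaf _ => []
  | .dashv w₁ w₂ => w₁.rightArgs ++ w₂.leaves
  | .vdash _ w₂ => w₂.rightArgs

section Aux

variable (l r : D → D → D)

/-- `l x (eval w)` right-absorbs into a left fold over the leaves. -/
lemma diaWord_l_eval (h1 : ∀ a b c : D, l (l a b) c = l a (l b c))
    (h5 : ∀ a b c : D, l a (l b c) = l a (r b c)) :
    ∀ (w : DiaWord D) (x : D), l x (w.eval l r) = w.leaves.foldl l x := by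
  intro w
  induction w with
  | leaf a => intro x; simp [DiaWord.eval, DiaWord.leaves]
  | dashv w₁ w₂ ih₁ ih₂ =>
      intro x
      simp only [DiaWord.eval, DiaWord.leaves, List.foldl_append]
      rw [← h1, ← ih₁ x]
      exact ih₂ _
  | vdash w₁ w₂ ih₁ ih₂ =>
      intro x
      simp only [DiaWord.eval, DiaWord.leaves, List.foldl_append]
      rw [← h5, ← h1, ← ih₁ x]
      exact ih₂ _

/-- `r (eval w) x` left-absorbs into a right fold over the leaves. -/
lemma diaWord_r_eval (h2 : ∀ a b c : D, r (r a b) c = r a (r b c))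
    (h4 : ∀ a b c : D, r (r a b) c = r (l a b) c) :
    ∀ (w : DiaWord D) (x : D), r (w.eval l r) x = w.leaves.foldr r x := by
  intro w
  induction w with
  | leaf a => intro x; simp [DiaWord.eval, DiaWord.leaves]
  | dashv w₁ w₂ ih₁ ih₂ =>
      intro x
      simp only [DiaWord.eval, DiaWord.leaves, List.foldr_append]
      rw [← h4, h2, ih₂ x]
      exact ih₁ _
  | vdash w₁ w₂ ih₁ ih₂ =>
      intro x
      simp only [DiaWord.eval, DiaWord.leaves, List.foldr_append]
      rw [h2, ih₂ x]
      exact ih₁ _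

/-- `l` moves past a right fold by `r`. -/
lemma l_foldr (h3 : ∀ a b c : D, l (r a b) c = r a (l b c)) :
    ∀ (L : List D) (x y : D), l (L.foldr r x) y = L.foldr r (l x y) := by
  intro L
  induction L with
  | nil => intro x y; simp
  | cons a L ih => intro x y; simp only [List.foldr_cons]; rw [h3, ih]

end Aux

/-- Loday's normal form lemma: every dialgebra monomial equals
`(a₁ ⊢ ⋯ ⊢ a_{k-1}) ⊢ a_k ⊣ (a_{k+1} ⊣ ⋯ ⊣ aₙ)` where `a_k` is its center. -/
theorem diaWord_eval_eq_normal_form (l r : D → D → D)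
    (h1 : ∀ a b c : D, l (l a b) c = l a (l b c))
    (h2 : ∀ a b c : D, r (r a b) c = r a (r b c))
    (h3 : ∀ a b c : D, l (r a b) c = r a (l b c))
    (h4 : ∀ a b c : D, r (r a b) c = r (l a b) c)
    (h5 : ∀ a b c : D, l a (l b c) = l a (r b c)) :
    ∀ w : DiaWord D,
      w.eval l r = w.leftArgs.foldr r (w.rightArgs.foldl l w.center) := by
  intro w
  induction w with
  | leaf a => simp [DiaWord.eval, DiaWord.center, DiaWord.leftArgs, DiaWord.rightArgs]
  | dashv w₁ w₂ ih₁ ih₂ =>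
      simp only [DiaWord.eval, DiaWord.center, DiaWord.leftArgs, DiaWord.rightArgs,
        List.foldl_append]
      rw [ih₁, l_foldr l r h3, ← diaWord_l_eval l r h1 h5 w₂]
  | vdash w₁ w₂ ih₁ ih₂ =>
      simp only [DiaWord.eval, DiaWord.center, DiaWord.leftArgs, DiaWord.rightArgs,
        List.foldr_append]
      rw [ih₂, ← diaWord_r_eval l r h2 h4 w₁]
end

section
/- In any associative dialgebra, define D_{a,d}(x) := (a·x)·d − a·(x·d) where a·b := a ⊣ b + b ⊢ a. Then for all a, b, c, d: D_{a,d}(b·c) = D_{a,d}(b)·c + D_{a,d}(c)·b. -/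
theorem quasiJordan_derivation_rule {R : Type*} [CommRing R] {D : Type*} [AddCommGroup D] [Module R D]
    (l r : D →ₗ[R] D →ₗ[R] D)
    (h1 : ∀ a b c : D, l (l a b) c = l a (l b c))
    (h2 : ∀ a b c : D, r (r a b) c = r a (r b c))
    (h3 : ∀ a b c : D, l (r a b) c = r a (l b c))
    (h4 : ∀ a b c : D, r (r a b) c = r (l a b) c)
    (h5 : ∀ a b c : D, l a (l b c) = l a (r b c)) :
    ∀ a b c d : D,
      q l r (q l r a (q l r b c)) d - q l r a (q l r (q l r b c) d) =
        q l r (q l r (q l r a b) d - q l r a (q l r b d)) c +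
          q l r (q l r (q l r a c) d - q l r a (q l r c d)) b := by
  intro a b c d
  simp only [q, map_add, map_sub, LinearMap.add_apply, LinearMap.sub_apply,
    h1, h3, ← h5, ← h4, h2]
  abel
end
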